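/- arXiv:1405.4374 — 6 statements merged into one kernel-verified Lean document; each statement's English description precedes it below -/
import Mathlib

section
/- Let a be an integer with |a| > 1, γ ≥ 2 an integer, and r an odd prime coprime to a dividing Φ_{3·2^γ}(a) − 1. Then the multiplicative order of a modulo r divides 2^γ. -/
open Polynomial

lemma cyclotomic_six_int : cyclotomic 6 ℤ = X ^ 2 - X + 1 := by
  have h3 : cyclotomic 3 ℤ = X ^ 2 + X + 1 := cyclotomic_three ℤ
  have hexp : expand ℤ 2 (cyclotomic 3 ℤ) = cyclotomic 6 ℤ * cyclotomic 3 ℤ :=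
    cyclotomic_expand_eq_cyclotomic_mul Nat.prime_two (by norm_num) ℤ
  have hne : (cyclotomic 3 ℤ) ≠ 0 := cyclotomic_ne_zero 3 ℤ
  refine mul_left_cancel₀ hne ?_
  rw [mul_comm, ← hexp, h3]
  rw [map_add, map_add, map_pow, expand_X, map_one]
  ring

lemma cyclotomic_eval_aux : ∀ (k : ℕ) (a : ℤ),
    (cyclotomic (3 * 2 ^ (k + 1)) ℤ).eval a = a ^ 2 ^ (k + 1) - a ^ 2 ^ k + 1 := by
  intro k
  induction k with
  | zero => intro a; norm_num [cyclotomic_six_int]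
  | succ n ih =>
    intro a
    have hdvd : (2 : ℕ) ∣ 3 * 2 ^ (n + 1) := ⟨3 * 2 ^ n, by ring⟩
    have hexp := cyclotomic_expand_eq_cyclotomic Nat.prime_two hdvd ℤ
    have hn : 3 * 2 ^ (n + 1) * 2 = 3 * 2 ^ (n + 2) := by ring
    rw [hn] at hexp
    rw [← hexp, expand_eval, ih (a ^ 2), ← pow_mul, ← pow_mul, ← pow_succ', ← pow_succ']

theorem order_dvd_of_dvd_cyclotomic_three_two_pow_sub_one (a : ℤ) (ha : 1 < |a|)
    (γ : ℕ) (hγ : 2 ≤ γ) (r : ℕ) (hr : r.Prime) (hrodd : Odd r)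
    (hcop : IsCoprime (r : ℤ) a)
    (hdvd : (r : ℤ) ∣ (Polynomial.cyclotomic (3 * 2 ^ γ) ℤ).eval a - 1) :
    orderOf ((a : ZMod r)) ∣ 2 ^ γ := by
  obtain ⟨k, rfl⟩ : ∃ k, γ = k + 1 := ⟨γ - 1, by omega⟩
  rw [cyclotomic_eval_aux k a] at hdvd
  have hfac : a ^ 2 ^ (k + 1) - a ^ 2 ^ k + 1 - 1 = a ^ 2 ^ k * (a ^ 2 ^ k - 1) := by
    rw [pow_succ, pow_mul]; ring
  rw [hfac] at hdvd
  have hrp : Prime (r : ℤ) := Nat.prime_iff_prime_int.mp hr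
  have h1 : (r : ℤ) ∣ a ^ 2 ^ k - 1 := by
    rcases hrp.dvd_mul.mp hdvd with h | h
    · exact absurd (hrp.dvd_of_dvd_pow h) (fun hd => hrp.not_unit (isUnit_of_dvd_unit
        (dvd_refl _) (hcop.isUnit_of_dvd' (dvd_refl _) hd)))
    · exact h
  haveI : NeZero r := ⟨hr.ne_zero⟩
  have : ((a : ZMod r)) ^ 2 ^ k = 1 := by
    have := (ZMod.intCast_zmod_eq_zero_iff_dvd _ r).mpr h1
    push_cast at this
    linear_combination this
  exact dvd_trans (orderOf_dvd_of_pow_eq_one this) (pow_dvd_pow 2 (Nat.le_succ k))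
end

section
/- Let a be an integer with |a| > 1, γ ≥ 2 an integer, and r an odd prime coprime to a dividing Φ_{9·2^γ}(a) − 1. Then the multiplicative order of a modulo r divides 3·2^{γ−1}. -/
open Polynomial

lemma cyclotomic_nine : cyclotomic 9 ℤ = X ^ 6 + X ^ 3 + 1 := by
  have h := cyclotomic_expand_eq_cyclotomic (p := 3) (n := 3) Nat.prime_three (dvd_refl 3) ℤ
  rw [cyclotomic_three] at h
  rw [show (9 : ℕ) = 3 * 3 by norm_num, ← h]
  simp only [map_add, map_pow, map_one, expand_X]
  ring

lemma cyclotomic_eighteen : cyclotomic 18 ℤ = X ^ 6 - X ^ 3 + 1 := by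
  have h := cyclotomic_expand_eq_cyclotomic_mul (p := 2) (n := 9) Nat.prime_two (by norm_num) ℤ
  rw [cyclotomic_nine] at h
  have h2 : (X ^ 12 + X ^ 6 + 1 : ℤ[X]) = cyclotomic (9 * 2) ℤ * (X ^ 6 + X ^ 3 + 1) := by
    rw [← h]; simp only [map_add, map_pow, map_one, expand_X]; ring
  have hne : (X ^ 6 + X ^ 3 + 1 : ℤ[X]) ≠ 0 := by
    rw [← cyclotomic_nine]; exact cyclotomic_ne_zero 9 ℤ
  have : (X ^ 6 - X ^ 3 + 1 : ℤ[X]) * (X ^ 6 + X ^ 3 + 1) =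
      cyclotomic (9 * 2) ℤ * (X ^ 6 + X ^ 3 + 1) := by rw [← h2]; ring
  have := mul_right_cancel₀ hne this
  rw [show (18 : ℕ) = 9 * 2 by norm_num, ← this]

lemma cyclotomic_expand_pow_two (k : ℕ) :
    cyclotomic (18 * 2 ^ k) ℤ = Polynomial.expand ℤ (2 ^ k) (cyclotomic 18 ℤ) := by
  induction k with
  | zero => simp
  | succ n ih =>
    have h := cyclotomic_expand_eq_cyclotomic (p := 2) (n := 18 * 2 ^ n) Nat.prime_two
      ⟨9 * 2 ^ n, by ring⟩ ℤ
    rw [show 18 * 2 ^ (n + 1) = 18 * 2 ^ n * 2 by ring, ← h, ih, expand_expand,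
      pow_succ, mul_comm]

theorem order_dvd_of_dvd_cyclotomic_nine_two_pow_sub_one (a : ℤ) (ha : 1 < |a|)
    (γ : ℕ) (hγ : 2 ≤ γ) (r : ℕ) (hr : r.Prime) (hrodd : Odd r)
    (hcop : IsCoprime (r : ℤ) a)
    (hdvd : (r : ℤ) ∣ (Polynomial.cyclotomic (9 * 2 ^ γ) ℤ).eval a - 1) :
    orderOf ((a : ZMod r)) ∣ 3 * 2 ^ (γ - 1) := by
  set k := γ - 1 with hk
  have hγk : γ = k + 1 := by omega
  have hn : 9 * 2 ^ γ = 18 * 2 ^ k := by rw [hγk]; ring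
  rw [hn, cyclotomic_expand_pow_two, expand_eval, cyclotomic_eighteen] at hdvd
  set b : ℤ := a ^ 2 ^ k with hb
  have heval : (X ^ 6 - X ^ 3 + 1 : ℤ[X]).eval b - 1 = b ^ 3 * (b ^ 3 - 1) := by
    simp; ring
  rw [heval] at hdvd
  have hcb : IsCoprime (r : ℤ) (b ^ 3) := (hcop.pow_right).pow_right
  have hdvd2 : (r : ℤ) ∣ b ^ 3 - 1 := hcb.dvd_of_dvd_mul_left hdvd
  have hb3 : b ^ 3 = a ^ (3 * 2 ^ k) := by rw [hb, ← pow_mul, mul_comm]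
  apply orderOf_dvd_of_pow_eq_one
  have : ((a ^ (3 * 2 ^ k) - 1 : ℤ) : ZMod r) = 0 := by
    rw [ZMod.intCast_zmod_eq_zero_iff_dvd]; rwa [hb3] at hdvd2
  push_cast at this
  linear_combination this
end

section
/- Define η(k) = k if k is odd and η(k) = k/2 if k is even. Let a, b be positive integers with b > a, and let A = { i ∈ ℕ : b − a < η(i) ≤ b }. If b is even then |A| = ⌊3a/2⌋, and if b is odd then |A| = ⌊(3a+1)/2⌋. -/
/-- `eta k = k` if `k` is odd, `k / 2` if `k` is even. -/
def eta (k : ℕ) : ℕ := if Even k then k / 2 else k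

private lemma odd_range_card (n : ℕ) :
    ((Finset.range n).filter (fun k => ¬ Even k)).card = n / 2 := by
  induction n with
  | zero => simp
  | succ n ih =>
    rw [Finset.range_add_one, Finset.filter_insert]
    by_cases h : Even n
    · rw [if_neg (by simpa using h), ih]
      obtain ⟨c, rfl⟩ := h; omega
    · rw [if_pos h, Finset.card_insert_of_notMem (by simp), ih]
      rw [Nat.not_even_iff_odd] at h; obtain ⟨c, rfl⟩ := h; omega

private lemma odd_Ioc_card (m n : ℕ) (h : m ≤ n) :
    ((Finset.Ioc m n).filter (fun k => ¬ Even k)).card = (n + 1) / 2 - (m + 1) / 2 := by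
  have hsplit : Finset.range (n + 1) = Finset.range (m + 1) ∪ Finset.Ioc m n := by
    ext k; simp only [Finset.mem_range, Finset.mem_union, Finset.mem_Ioc]; omega
  have hdisj : Disjoint ((Finset.range (m+1)).filter (fun k => ¬ Even k))
      ((Finset.Ioc m n).filter (fun k => ¬ Even k)) := by
    simp only [Finset.disjoint_left, Finset.mem_filter, Finset.mem_range, Finset.mem_Ioc]
    omega
  have := odd_range_card (n + 1)
  rw [hsplit, Finset.filter_union, Finset.card_union_of_disjoint hdisj, odd_range_card] at this
  omega

theorem card_eta_interval (a b : ℕ) (ha : 0 < a) (hab : a < b) :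
    (Even b → {i : ℕ | b - a < eta i ∧ eta i ≤ b}.ncard = 3 * a / 2) ∧
    (Odd b → {i : ℕ | b - a < eta i ∧ eta i ≤ b}.ncard = (3 * a + 1) / 2) := by
  set F : Finset ℕ := ((Finset.Ioc (b-a) b).image (fun m => 2 * m)) ∪
      ((Finset.Ioc (b-a) b).filter (fun k => ¬ Even k)) with hF
  have hset : {i : ℕ | b - a < eta i ∧ eta i ≤ b} = ↑F := by
    ext i
    simp only [Set.mem_setOf_eq, hF, Finset.coe_union, Set.mem_union, Finset.coe_image,
      Finset.coe_filter, Set.mem_image, Set.mem_setOf_eq, Finset.mem_Ioc, Finset.mem_coe]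
    by_cases h : Even i
    · obtain ⟨c, rfl⟩ := h
      have he : eta (c + c) = c := by rw [eta, if_pos ⟨c, rfl⟩]; omega
      rw [he]
      constructor
      · intro hc; exact Or.inl ⟨c, hc, by omega⟩
      · rintro (⟨x, hx, hxe⟩ | ⟨_, hodd⟩)
        · omega
        · exact absurd ⟨c, rfl⟩ hodd
    · have he : eta i = i := by simp [eta, h]
      rw [he]
      constructor
      · intro hi; exact Or.inr ⟨hi, h⟩
      · rintro (⟨x, hx, rfl⟩ | ⟨hi, _⟩)
        · exact absurd ⟨x, by ring⟩ h
        · exact hi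
  have hdisj : Disjoint ((Finset.Ioc (b-a) b).image (fun m => 2 * m))
      ((Finset.Ioc (b-a) b).filter (fun k => ¬ Even k)) := by
    simp only [Finset.disjoint_left, Finset.mem_image, Finset.mem_filter]
    rintro x ⟨m, _, rfl⟩ ⟨_, hodd⟩
    exact hodd ⟨m, by ring⟩
  have hcard : F.card = a + ((b + 1) / 2 - (b - a + 1) / 2) := by
    rw [hF, Finset.card_union_of_disjoint hdisj,
      Finset.card_image_of_injective _ (fun x y h => by omega),
      Nat.card_Ioc, odd_Ioc_card _ _ (by omega)]
    omega
  rw [hset, Set.ncard_coe_finset, hcard]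
  constructor
  · rintro ⟨c, rfl⟩; omega
  · rintro ⟨c, rfl⟩; omega
end

section
/- For every natural number n ≥ 30, the open interval (5n/6, n) contains a prime number. -/
/-!
Chebyshev's method. By `log n! = ∑_{d ≤ n} ⌊n/d⌋ Λ(d)`, the combination
`T(m) = log (30m)! - log (15m)! - log (10m)! - log (6m)! + log m!` equals `∑ Λ(d) w(⌊30m/d⌋)`
with `w(k) = k - ⌊k/2⌋ - ⌊k/3⌋ - ⌊k/5⌋ + ⌊k/30⌋ ∈ {0, 1}`, and `w = 1` on `[1, 5] ∪ [7, 9]`.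
Stirling's formula gives `T(m) = Cm + O(log m)` with `C = 14 log 2 + 9 log 3 + 5 log 5 ≈ 27.6388`.
Hence `ψ(x) ≥ (C/30) x - O(log x)`, while `ψ(x) ≤ T + ψ(x/6) - ψ(x/7) + ψ(x/10)` bootstraps to
`ψ(x) ≤ 1.1 x + 32000`. As `(5/6) · 1.1 < C/30`, together with `ψ - θ ≤ 2 √x log x` this gives
`θ(5n/6) < θ(n - 1)` for `n > 10^8`. Below `10^8` a chain of primes, each less than `6/5` times
the previous one, does the job.
-/

open Real Finset
open scoped Nat ArithmeticFunction.vonMangoldt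

theorem Real.log_le_div_add_log_sub_one {x c : ℝ} (hx : 0 < x) (hc : 0 < c) :
    log x ≤ x / c + log c - 1 := by
  have := log_le_sub_one_of_pos (div_pos hx hc)
  rw [log_div hx.ne' hc.ne'] at this
  linarith

namespace Chebyshev

theorem log_factorial_eq_sum_div_mul_vonMangoldt {n N : ℕ} (hnN : n ≤ N) :
    log (n ! : ℝ) = ∑ d ∈ Ioc 0 N, ((n / d : ℕ) : ℝ) * Λ d := by
  have hfac : ((n ! : ℕ) : ℝ) = ∏ k ∈ Ioc 0 n, (k : ℝ) := by
    rw [← Finset.Ico_add_one_add_one_eq_Ioc, ← Finset.prod_Ico_id_eq_factorial]; push_cast; rfl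
  calc log (n ! : ℝ) = ∑ k ∈ Ioc 0 n, ∑ d ∈ k.divisors, Λ d := by
        rw [hfac, log_prod fun k hk => Nat.cast_ne_zero.2 (mem_Ioc.1 hk).1.ne']
        simp only [ArithmeticFunction.vonMangoldt_sum]
    _ = ∑ d ∈ Ioc 0 N, ∑ k ∈ Ioc 0 n with d ∣ k, Λ d := by
        refine sum_comm' fun k d => ?_
        simp only [mem_Ioc, Nat.mem_divisors, mem_filter]
        constructor
        · rintro ⟨⟨hk, hkn⟩, hdk, -⟩
          exact ⟨⟨⟨hk, hkn⟩, hdk⟩,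
            Nat.pos_of_dvd_of_pos hdk hk, (Nat.le_of_dvd hk hdk).trans (hkn.trans hnN)⟩
        · rintro ⟨⟨⟨hk, hkn⟩, hdk⟩, -⟩
          exact ⟨⟨hk, hkn⟩, hdk, hk.ne'⟩
    _ = ∑ d ∈ Ioc 0 N, ((n / d : ℕ) : ℝ) * Λ d := by
        simp only [sum_const, Nat.Ioc_filter_dvd_card_eq_div, nsmul_eq_mul]

-- Not normalised to tend to `0`: its limit is `log (2 * π) / 2`.
noncomputable def stirlingRemainder (n : ℕ) : ℝ := log (n ! : ℝ) - (n * log n - n + log n / 2)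

theorem stirlingRemainder_le_one {n : ℕ} (hn : n ≠ 0) : stirlingRemainder n ≤ 1 := by
  have hanti : log (Stirling.stirlingSeq n) ≤ log (Stirling.stirlingSeq 1) := by
    obtain ⟨k, rfl⟩ := Nat.exists_eq_succ_of_ne_zero hn
    exact Stirling.log_stirlingSeq'_antitone (Nat.zero_le k)
  have hn' : (n : ℝ) ≠ 0 := by exact_mod_cast hn
  rw [Stirling.log_stirlingSeq_formula, Stirling.stirlingSeq_one, log_div (exp_pos 1).ne'
    (by positivity), log_exp, log_sqrt zero_le_two, log_mul two_ne_zero hn',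
    log_div hn' (exp_pos 1).ne', log_exp] at hanti
  unfold stirlingRemainder
  linarith

theorem log_two_mul_pi_div_two_le_stirlingRemainder {n : ℕ} (hn : n ≠ 0) :
    log (2 * π) / 2 ≤ stirlingRemainder n := by
  have := Stirling.le_log_factorial_stirling hn
  unfold stirlingRemainder
  linarith

theorem psi_natCast (n : ℕ) : ψ n = ∑ d ∈ Ioc 0 n, Λ d := by
  simp [psi]

theorem psi_sub_psi_eq_sum_Ioc {a b : ℕ} (hab : a ≤ b) : ψ b - ψ a = ∑ d ∈ Ioc a b, Λ d := by
  rw [psi_natCast, psi_natCast, ← sum_Ioc_consecutive _ (Nat.zero_le a) hab, add_sub_cancel_left]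

noncomputable def chebyshevCombination (m : ℕ) : ℝ :=
  log ((30 * m) ! : ℝ) - log ((15 * m) ! : ℝ) - log ((10 * m) ! : ℝ) - log ((6 * m) ! : ℝ) +
    log (m ! : ℝ)

noncomputable def chebyshevWeight (k : ℕ) : ℝ :=
  k - (k / 2 : ℕ) - (k / 3 : ℕ) - (k / 5 : ℕ) + (k / 30 : ℕ)

theorem chebyshevWeight_nonneg (k : ℕ) : 0 ≤ chebyshevWeight k := by
  have h : ((k / 2 + k / 3 + k / 5 : ℕ) : ℝ) ≤ (k + k / 30 : ℕ) := by norm_cast; omega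
  push_cast at h
  unfold chebyshevWeight
  linarith

theorem chebyshevWeight_le_one (k : ℕ) : chebyshevWeight k ≤ 1 := by
  have h : ((k + k / 30 : ℕ) : ℝ) ≤ (k / 2 + k / 3 + k / 5 + 1 : ℕ) := by norm_cast; omega
  push_cast at h
  unfold chebyshevWeight
  linarith

theorem chebyshevWeight_eq_one {k : ℕ} (hk : 1 ≤ k ∧ k ≤ 5 ∨ 7 ≤ k ∧ k ≤ 9) :
    chebyshevWeight k = 1 := by
  have h : ((k + k / 30 : ℕ) : ℝ) = (k / 2 + k / 3 + k / 5 + 1 : ℕ) := by norm_cast; omega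
  push_cast at h
  unfold chebyshevWeight
  linarith

theorem chebyshevCombination_eq_sum (m : ℕ) :
    chebyshevCombination m = ∑ d ∈ Ioc 0 (30 * m), chebyshevWeight (30 * m / d) * Λ d := by
  have hdiv (a b d : ℕ) (hb : 0 < b) : a * b / d / b = a / d := by
    rw [Nat.div_div_eq_div_mul, Nat.mul_div_mul_right _ _ hb]
  unfold chebyshevCombination
  simp only [log_factorial_eq_sum_div_mul_vonMangoldt (show 15 * m ≤ 30 * m by omega),
    log_factorial_eq_sum_div_mul_vonMangoldt (show 10 * m ≤ 30 * m by omega),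
    log_factorial_eq_sum_div_mul_vonMangoldt (show 6 * m ≤ 30 * m by omega),
    log_factorial_eq_sum_div_mul_vonMangoldt (show m ≤ 30 * m by omega),
    log_factorial_eq_sum_div_mul_vonMangoldt le_rfl, ← sum_sub_distrib, ← sum_add_distrib]
  refine sum_congr rfl fun d _ => ?_
  have h2 : 30 * m / d / 2 = 15 * m / d := by
    rw [show 30 * m = 15 * m * 2 by ring]; exact hdiv _ _ _ (by norm_num)
  have h3 : 30 * m / d / 3 = 10 * m / d := by
    rw [show 30 * m = 10 * m * 3 by ring]; exact hdiv _ _ _ (by norm_num)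
  have h5 : 30 * m / d / 5 = 6 * m / d := by
    rw [show 30 * m = 6 * m * 5 by ring]; exact hdiv _ _ _ (by norm_num)
  have h30 : 30 * m / d / 30 = m / d := by
    rw [show 30 * m = m * 30 by ring]; exact hdiv _ _ _ (by norm_num)
  rw [chebyshevWeight, h2, h3, h5, h30]
  ring

theorem chebyshevCombination_le_psi (m : ℕ) : chebyshevCombination m ≤ ψ (30 * m) := by
  rw [chebyshevCombination_eq_sum, show (30 * m : ℝ) = (30 * m : ℕ) by push_cast; ring,
    psi_natCast]
  exact sum_le_sum fun d _ => mul_le_of_le_one_left ArithmeticFunction.vonMangoldt_nonneg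
    (chebyshevWeight_le_one _)

theorem psi_sub_psi_add_psi_sub_psi_le_chebyshevCombination (m : ℕ) :
    ψ (30 * m) - ψ (5 * m) + (ψ (30 * m / 7) - ψ (3 * m)) ≤ chebyshevCombination m := by
  have hfloor : ψ (30 * m / 7) = ψ (30 * m / 7 : ℕ) := by
    rw [psi_eq_psi_coe_floor, show (30 * m : ℝ) = (30 * m : ℕ) by push_cast; ring,
      Nat.floor_div_ofNat, Nat.floor_natCast]
  rw [hfloor, show (30 * m : ℝ) = (30 * m : ℕ) by push_cast; ring,
    show (5 * m : ℝ) = (5 * m : ℕ) by push_cast; ring,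
    show (3 * m : ℝ) = (3 * m : ℕ) by push_cast; ring, psi_sub_psi_eq_sum_Ioc (by omega),
    psi_sub_psi_eq_sum_Ioc (by omega), ← sum_union, chebyshevCombination_eq_sum]
  · calc ∑ d ∈ Ioc (5 * m) (30 * m) ∪ Ioc (3 * m) (30 * m / 7), Λ d
          = ∑ d ∈ Ioc (5 * m) (30 * m) ∪ Ioc (3 * m) (30 * m / 7),
              chebyshevWeight (30 * m / d) * Λ d := by
            refine sum_congr rfl fun d hd => ?_
            rw [chebyshevWeight_eq_one, one_mul]
            have hd0 : 0 < d := by simp only [mem_union, mem_Ioc] at hd; omega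
            simp only [mem_union, mem_Ioc, Nat.le_div_iff_mul_le (by norm_num : 0 < 7)] at hd
            have hlt (j : ℕ) : 30 * m / d < j ↔ 30 * m < j * d := Nat.div_lt_iff_lt_mul hd0
            have hle (j : ℕ) : j ≤ 30 * m / d ↔ j * d ≤ 30 * m := Nat.le_div_iff_mul_le hd0
            generalize 30 * m / d = k at hlt hle ⊢
            have := hlt 6; have := hlt 10; have := hle 1; have := hle 7
            omega
      _ ≤ ∑ d ∈ Ioc 0 (30 * m), chebyshevWeight (30 * m / d) * Λ d := by
            refine sum_le_sum_of_subset_of_nonneg ?_ fun d _ _ =>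
              mul_nonneg (chebyshevWeight_nonneg _) ArithmeticFunction.vonMangoldt_nonneg
            intro d hd
            simp only [mem_union, mem_Ioc] at hd ⊢
            omega
  · rw [disjoint_left]
    intro d hd hd'
    simp only [mem_Ioc] at hd hd'
    omega

theorem chebyshevCombination_eq {m : ℕ} (hm : m ≠ 0) :
    chebyshevCombination m = (14 * log 2 + 9 * log 3 + 5 * log 5) * m - log (30 * m) / 2 +
      (stirlingRemainder (30 * m) - stirlingRemainder (15 * m) - stirlingRemainder (10 * m) -
        stirlingRemainder (6 * m) + stirlingRemainder m) := by
  have hm' : (m : ℝ) ≠ 0 := by exact_mod_cast hm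
  have l30 : log (30 * m) = log 2 + log 3 + log 5 + log m := by
    rw [show (30 : ℝ) = 2 * 3 * 5 by norm_num, log_mul (by norm_num) hm', log_mul (by norm_num)
      (by norm_num), log_mul (by norm_num) (by norm_num)]
  have l15 : log (15 * m) = log 3 + log 5 + log m := by
    rw [show (15 : ℝ) = 3 * 5 by norm_num, log_mul (by norm_num) hm', log_mul (by norm_num)
      (by norm_num)]
  have l10 : log (10 * m) = log 2 + log 5 + log m := by
    rw [show (10 : ℝ) = 2 * 5 by norm_num, log_mul (by norm_num) hm', log_mul (by norm_num)
      (by norm_num)]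
  have l6 : log (6 * m) = log 2 + log 3 + log m := by
    rw [show (6 : ℝ) = 2 * 3 by norm_num, log_mul (by norm_num) hm', log_mul (by norm_num)
      (by norm_num)]
  simp only [chebyshevCombination, stirlingRemainder, Nat.cast_mul, Nat.cast_ofNat, l30, l15, l10,
    l6]
  ring

-- The left-hand side is `log (2 ^ 14 * 3 ^ 9 * 5 ^ 5)`, and that number lies between `2 ^ 39.87`
-- and `2 ^ 39.88`.
theorem fourteen_mul_log_two_add_nine_mul_log_three_add_five_mul_log_five_mem_Ioo :
    14 * log 2 + 9 * log 3 + 5 * log 5 ∈ Set.Ioo 27.635 27.643 := by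
  have hC : 14 * log 2 + 9 * log 3 + 5 * log 5 = log 1007769600000 := by
    rw [show (1007769600000 : ℝ) = 2 ^ 14 * 3 ^ 9 * 5 ^ 5 by norm_num, log_mul (by norm_num)
      (by norm_num), log_mul (by norm_num) (by norm_num), log_pow, log_pow, log_pow]
    push_cast; ring
  have hlo : (2 : ℝ) ^ 3987 < 1007769600000 ^ 100 := by
    exact_mod_cast (by decide +kernel : 2 ^ 3987 < 1007769600000 ^ 100)
  have hhi : (1007769600000 : ℝ) ^ 100 < 2 ^ 3988 := by
    exact_mod_cast (by decide +kernel : 1007769600000 ^ 100 < 2 ^ 3988)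
  have hlo' := log_lt_log (by positivity) hlo
  have hhi' := log_lt_log (by positivity) hhi
  rw [log_pow, log_pow] at hlo' hhi'
  push_cast at hlo' hhi'
  rw [hC, Set.mem_Ioo]
  constructor <;> linarith [log_two_gt_d9, log_two_lt_d9]

theorem log_two_mul_pi_gt : 1.38 < log (2 * π) := by
  have h4 : log 4 ≤ log (2 * π) := log_le_log (by norm_num) (by linarith [pi_gt_three])
  rw [show (4 : ℝ) = 2 ^ 2 by norm_num, log_pow] at h4
  push_cast at h4
  linarith [log_two_gt_d9]

theorem chebyshevCombination_le {m : ℕ} (hm : m ≠ 0) : chebyshevCombination m ≤ 27.643 * m := by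
  have hlog : 0 ≤ log (30 * m) := log_nonneg (by norm_cast; omega)
  have hm15 : 15 * m ≠ 0 := by omega
  have hm10 : 10 * m ≠ 0 := by omega
  have hm6 : 6 * m ≠ 0 := by omega
  have hm30 : 30 * m ≠ 0 := by omega
  rw [chebyshevCombination_eq hm]
  nlinarith [stirlingRemainder_le_one hm30, stirlingRemainder_le_one hm,
    log_two_mul_pi_div_two_le_stirlingRemainder hm15,
    log_two_mul_pi_div_two_le_stirlingRemainder hm10,
    log_two_mul_pi_div_two_le_stirlingRemainder hm6, log_two_mul_pi_gt,
    fourteen_mul_log_two_add_nine_mul_log_three_add_five_mul_log_five_mem_Ioo.2,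
    (Nat.cast_nonneg m : (0 : ℝ) ≤ m)]

theorem chebyshevCombination_ge {m : ℕ} (hm : m ≠ 0) :
    27.635 * m - log (30 * m) / 2 - 2 ≤ chebyshevCombination m := by
  have hm15 : 15 * m ≠ 0 := by omega
  have hm10 : 10 * m ≠ 0 := by omega
  have hm6 : 6 * m ≠ 0 := by omega
  have hm30 : 30 * m ≠ 0 := by omega
  rw [chebyshevCombination_eq hm]
  nlinarith [stirlingRemainder_le_one hm15, stirlingRemainder_le_one hm10,
    stirlingRemainder_le_one hm6, log_two_mul_pi_div_two_le_stirlingRemainder hm30,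
    log_two_mul_pi_div_two_le_stirlingRemainder hm, log_two_mul_pi_gt,
    fourteen_mul_log_two_add_nine_mul_log_three_add_five_mul_log_five_mem_Ioo.1,
    (Nat.cast_nonneg m : (0 : ℝ) ≤ m)]

theorem psi_ge_of_thirty_le {x : ℝ} (hx : 30 ≤ x) :
    27.635 * (x - 30) / 30 - log x / 2 - 2 ≤ ψ x := by
  set m := ⌊x / 30⌋₊
  have hm : m ≠ 0 := by
    refine (Nat.floor_pos.2 ?_).ne'
    rw [le_div_iff₀ (by norm_num)]; linarith
  have hmx : 30 * (m : ℝ) ≤ x := by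
    have := Nat.floor_le (show 0 ≤ x / 30 by positivity); linarith [this]
  have hxm : x - 30 < 30 * (m : ℝ) := by
    have := Nat.lt_floor_add_one (x / 30); linarith [this]
  have hm1 : (1 : ℝ) ≤ m := by exact_mod_cast Nat.one_le_iff_ne_zero.2 hm
  have hlog : log (30 * m) ≤ log x := log_le_log (by linarith) hmx
  linarith [chebyshevCombination_ge hm, chebyshevCombination_le_psi m, psi_mono hmx]

theorem psi_le_six_div_five_mul_add (n : ℕ) : ψ n ≤ 6 / 5 * n + 1900 := by
  induction n using Nat.strong_induction_on with
  | _ n ih =>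
  rcases lt_or_ge n 450 with hn | hn
  · have hlog4 : log 4 < 1.3863 := by
      rw [show (4 : ℝ) = 2 ^ 2 by norm_num, log_pow]; push_cast; linarith [log_two_lt_d9]
    have hn' : (n : ℝ) < 450 := by exact_mod_cast hn
    nlinarith [psi_le_const_mul_self (Nat.cast_nonneg (α := ℝ) n),
      (Nat.cast_nonneg n : (0 : ℝ) ≤ n)]
  · set m := n / 30 + 1 with hm
    have hm16 : (16 : ℝ) ≤ m := by exact_mod_cast (show 16 ≤ m by omega)
    have hnm : (30 * m : ℝ) ≤ n + 30 := by exact_mod_cast (show 30 * m ≤ n + 30 by omega)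
    have hψn : ψ n ≤ ψ (30 * m) := psi_mono (by exact_mod_cast (show n ≤ 30 * m by omega))
    have hψ7 : ψ (3 * m) ≤ ψ (30 * m / 7) := psi_mono (by linarith)
    have ih5 := ih (5 * m) (by omega)
    push_cast at ih5
    linarith [psi_sub_psi_add_psi_sub_psi_le_chebyshevCombination m,
      chebyshevCombination_le (show m ≠ 0 by omega)]

theorem psi_le_eleven_div_ten_mul_add (n : ℕ) : ψ n ≤ 11 / 10 * n + 32000 := by
  induction n using Nat.strong_induction_on with
  | _ n ih =>
  rcases le_or_gt n 300000 with hn | hn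
  · have hn' : (n : ℝ) ≤ 300000 := by exact_mod_cast hn
    linarith [psi_le_six_div_five_mul_add n]
  · set m := n / 30 + 1 with hm
    have hm' : (10001 : ℝ) ≤ m := by exact_mod_cast (show 10001 ≤ m by omega)
    have hnm : (30 * m : ℝ) ≤ n + 30 := by exact_mod_cast (show 30 * m ≤ n + 30 by omega)
    have hψn : ψ n ≤ ψ (30 * m) := psi_mono (by exact_mod_cast (show n ≤ 30 * m by omega))
    have ih5 := ih (5 * m) (by omega)
    -- The induction hypothesis at `3 * m` would count the constant `32000` twice.
    have h3 := psi_le_six_div_five_mul_add (3 * m)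
    push_cast at ih5 h3
    have hlow := psi_ge_of_thirty_le (x := 30 * m / 7) (by linarith)
    have hlog := log_le_div_add_log_sub_one (x := 30 * m / 7) (c := 2 ^ 16) (by positivity)
      (by positivity)
    rw [log_pow] at hlog
    push_cast at hlog
    linarith [psi_sub_psi_add_psi_sub_psi_le_chebyshevCombination m,
      chebyshevCombination_le (show m ≠ 0 by omega), log_two_lt_d9]

theorem exists_prime_of_theta_lt {a b : ℕ} (h : θ a < θ b) : ∃ p, p.Prime ∧ a < p ∧ p ≤ b := by
  by_contra! hno
  refine h.not_ge ?_
  rw [theta_eq_sum_primesLE_log, theta_eq_sum_primesLE_log]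
  refine sum_le_sum_of_subset_of_nonneg (fun p hp => ?_) fun p _ _ => log_natCast_nonneg p
  rw [Nat.mem_primesLE] at hp ⊢
  exact ⟨not_lt.1 fun hap => (hno p hp.2 hap).not_ge hp.1, hp.2⟩

theorem theta_five_mul_div_six_lt {n : ℕ} (hn : 10 ^ 8 < n) :
    θ (5 * n / 6 : ℕ) < θ (n - 1 : ℕ) := by
  -- The main terms differ by `(27.635 / 30 - 11 / 12) b > 0.0045 b`, which exceeds
  -- `2 √b log b + 32030` from `b = 10 ^ 8` on.
  set b := n - 1
  have hb : (10 ^ 8 : ℝ) ≤ b := by exact_mod_cast (show 10 ^ 8 ≤ b by omega)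
  have ha : ((6 * (5 * n / 6) : ℕ) : ℝ) ≤ ((5 * (b + 1) : ℕ) : ℝ) := by
    exact_mod_cast (show 6 * (5 * n / 6) ≤ 5 * (b + 1) by omega)
  push_cast at ha
  set y := √(b : ℝ)
  have hyb : y ^ 2 = b := sq_sqrt (Nat.cast_nonneg b)
  have hy : 10 ^ 4 ≤ y := le_sqrt_of_sq_le (by linarith)
  have hlogb : log b = 2 * log y := by rw [← hyb, log_pow]; push_cast; ring
  have hlogy := log_le_div_add_log_sub_one (x := y) (c := 2 ^ 13) (by positivity) (by positivity)
  rw [log_pow] at hlogy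
  push_cast at hlogy
  have hylog : (1 + 4 * y) * log y ≤ (1 + 4 * y) * (y / 2 ^ 13 + 13 * log 2 - 1) :=
    mul_le_mul_of_nonneg_left hlogy (by positivity)
  have hθb := psi_sub_theta_le (x := b) (by linarith)
  have hψb := psi_ge_of_thirty_le (x := b) (by linarith)
  have hθa := (theta_le_psi _).trans (psi_le_eleven_div_ten_mul_add (5 * n / 6))
  rw [hlogb] at hθb hψb
  nlinarith [log_two_lt_d9]

end Chebyshev

theorem exists_prime_five_mul_lt_six_mul_of_isChain {n N : ℕ} :
    ∀ {p : ℕ} {l : List ℕ}, (∀ q ∈ p :: l, q.Prime) →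
      (p :: l ++ [N]).IsChain (fun a b => 5 * b < 6 * a) → p < n → n ≤ N →
      ∃ q, q.Prime ∧ 5 * n < 6 * q ∧ q < n
  | p, [], hprime, hchain, hpn, hnN => by
    have hpN : 5 * N < 6 * p := (List.isChain_cons_cons.1 hchain).1
    exact ⟨p, hprime p List.mem_cons_self, by omega, hpn⟩
  | p, q :: l, hprime, hchain, hpn, hnN => by
    obtain ⟨hpq, hchain⟩ := List.isChain_cons_cons.1 hchain
    rcases lt_or_ge q n with hqn | hnq
    · exact exists_prime_five_mul_lt_six_mul_of_isChain
        (fun r hr => hprime r (List.mem_cons_of_mem p hr)) hchain hqn hnN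
    · exact ⟨p, hprime p List.mem_cons_self, by omega, hpn⟩

theorem exists_prime_in_five_sixths_of_le {n : ℕ} (hn : 30 ≤ n) (hN : n ≤ 10 ^ 8) :
    ∃ p : ℕ, p.Prime ∧ 5 * n < 6 * p ∧ p < n := by
  refine exists_prime_five_mul_lt_six_mul_of_isChain (p := 29)
    (l := [31, 37, 43, 47, 53, 61, 73, 83, 97, 113, 131, 157, 181, 211, 251, 293, 349, 409, 487,
      577, 691, 829, 991, 1187, 1423, 1699, 2029, 2423, 2903, 3469, 4159, 4987, 5981, 7177, 8609,
      10321, 12379, 14851, 17807, 21347, 25609, 30727, 36871, 44221, 53051, 63659, 76387, 91639,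
      109961, 131947, 158329, 189989, 227977, 273569, 328277, 393931, 472711, 567209, 680633,
      816743, 980081, 1176089, 1411297, 1693553, 2032253, 2438693, 2926421, 3511693, 4214009,
      5056781, 6068137, 7281751, 8738101, 10485721, 12582853, 15099419, 18119291, 21743131,
      26091727, 31310047, 37572053, 45086453, 54103739, 64924481, 77909357, 93491221])
    ?_ (by decide +kernel) (by omega) hN
  simp only [List.forall_mem_cons, List.not_mem_nil, IsEmpty.forall_iff, implies_true, and_true]
  norm_num

/-- For every `n ≥ 30` the open interval `(5n/6, n)` contains a prime. -/
theorem exists_prime_in_five_sixths (n : ℕ) (hn : 30 ≤ n) :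
    ∃ p : ℕ, p.Prime ∧ 5 * n < 6 * p ∧ p < n := by
  rcases le_or_gt n (10 ^ 8) with hsmall | hlarge
  · exact exists_prime_in_five_sixths_of_le hn hsmall
  · obtain ⟨p, hp, hap, hpb⟩ :=
      Chebyshev.exists_prime_of_theta_lt (Chebyshev.theta_five_mul_div_six_lt hlarge)
    exact ⟨p, hp, by omega, by omega⟩
end

section
/- Let a ≥ 2 and i ≥ 3 be integers with (a, i) ∉ {(2,3), (2,6)}, and suppose the largest prime divisor r of i satisfies: writing i = r^α·k with r ∤ k, r divides Φ_k(a). If r ≥ 5 and (r, a^{r^{α−1}}) ≠ (5,2), then Φ_i(a)/r > a^{φ(i)/2}, where φ is Euler's totient function. -/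
open Polynomial Nat

private lemma aux_pow_ineq {bn m : ℕ} (hb : 2 ≤ bn) (hm : 2 ≤ m)
    (h : ¬(m = 2 ∧ bn = 2)) : (bn + 1) ^ 2 + 1 ≤ bn ^ (m + 1) := by
  rcases eq_or_lt_of_le hb with hb2 | hb3
  · have hm3 : 3 ≤ m := by omega
    subst hb2
    calc (2 + 1) ^ 2 + 1 = 10 := by norm_num
      _ ≤ 2 ^ 4 := by norm_num
      _ ≤ 2 ^ (m + 1) := Nat.pow_le_pow_right (by norm_num) (by omega)
  · calc (bn + 1) ^ 2 + 1 ≤ bn ^ 3 := by nlinarith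
      _ ≤ bn ^ (m + 1) := Nat.pow_le_pow_right (by omega) (by omega)

private lemma cyclo_pow_eval (r k : ℕ) (hr : r.Prime) :
    ∀ (j : ℕ) (y : ℤ), (cyclotomic (r ^ (j + 1) * k) ℤ).eval y =
      (cyclotomic (r * k) ℤ).eval (y ^ r ^ j)
  | 0, y => by simp
  | j + 1, y => by
    have hdvd : r ∣ r ^ (j + 1) * k :=
      dvd_mul_of_dvd_left (dvd_pow_self r (Nat.succ_ne_zero j)) k
    have h1 : cyclotomic (r ^ (j + 2) * k) ℤ =
        Polynomial.expand ℤ r (cyclotomic (r ^ (j + 1) * k) ℤ) := by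
      rw [cyclotomic_expand_eq_cyclotomic hr hdvd]
      ring_nf
    rw [h1, expand_eval, cyclo_pow_eval r k hr j (y ^ r), ← pow_mul, ← pow_succ']

private lemma int_eval_cast_real (n : ℕ) (x : ℤ) :
    (((cyclotomic n ℤ).eval x : ℤ) : ℝ) = (cyclotomic n ℝ).eval (x : ℝ) := by
  have := cyclotomic.eval_apply x n (Int.castRingHom ℝ)
  simpa using this.symm

private lemma nat_eval_cast_real (n x : ℕ) :
    (((cyclotomic n ℤ).eval ((x : ℕ) : ℤ) : ℤ) : ℝ) = (cyclotomic n ℝ).eval (x : ℝ) := by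
  rw [int_eval_cast_real]; push_cast; ring_nf

private lemma nat_eval_pow_cast_real (n x e : ℕ) :
    (((cyclotomic n ℤ).eval (((x : ℕ) : ℤ) ^ e) : ℤ) : ℝ) =
      (cyclotomic n ℝ).eval ((x : ℝ) ^ e) := by
  rw [int_eval_cast_real]; push_cast; ring_nf

/-- If `r` is the largest prime divisor of `i`, `i = r ^ α * k` with `r ∤ k`,
`r ∣ Φ_k(a)`, `r ≥ 5` and `(r, a ^ (r ^ (α - 1))) ≠ (5, 2)`, then
`Φ_i(a) / r > a ^ (φ(i) / 2)`. -/
theorem cyclotomic_div_r_gt (a i : ℕ) (ha : 2 ≤ a) (hi : 3 ≤ i)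
    (hexc : ¬(a = 2 ∧ i = 3) ∧ ¬(a = 2 ∧ i = 6))
    (r α k : ℕ) (hr : r.Prime) (hri : r ∣ i)
    (hmax : ∀ s : ℕ, s.Prime → s ∣ i → s ≤ r)
    (hik : i = r ^ α * k) (hrk : ¬ r ∣ k)
    (hdvd : (r : ℤ) ∣ (Polynomial.cyclotomic k ℤ).eval (a : ℤ))
    (hr5 : 5 ≤ r) (hne : ¬(r = 5 ∧ a ^ r ^ (α - 1) = 2)) :
    ((a : ℚ)) ^ (i.totient / 2) <
      (((Polynomial.cyclotomic i ℤ).eval (a : ℤ) : ℤ) : ℚ) / (r : ℚ) := by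
  -- basic setup
  have hα : 1 ≤ α := by
    rcases Nat.eq_zero_or_pos α with h0 | h
    · subst h0; rw [pow_zero, one_mul] at hik
      exact absurd (hik ▸ hri) hrk
    · exact h
  set β := α - 1 with hβ
  have hαβ : α = β + 1 := by omega
  set bn := a ^ r ^ β with hbn
  have hbn2 : 2 ≤ bn := le_trans ha (Nat.le_self_pow (pow_ne_zero _ hr.pos.ne') a)
  have hk : k ≠ 0 := by rintro rfl; rw [mul_zero] at hik; omega
  set E := k.totient with hEdef
  have hE : 1 ≤ E := Nat.totient_pos.2 (Nat.pos_of_ne_zero hk)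
  have hrodd : Odd r := hr.odd_of_ne_two (by omega)
  obtain ⟨m, hm⟩ := hrodd
  have hm2 : 2 ≤ m := by omega
  have hnem : ¬(m = 2 ∧ bn = 2) := by
    rintro ⟨h1, h2⟩; exact hne ⟨by omega, h2⟩
  -- the key identity: Φ_i(a) = Φ_{rk}(bn)
  have habn : ((a : ℤ)) ^ r ^ β = (bn : ℤ) := by push_cast [hbn]; ring
  have hId : (cyclotomic i ℤ).eval (a : ℤ) =
      (cyclotomic (r * k) ℤ).eval ((bn : ℤ)) := by
    rw [hik, hαβ, cyclo_pow_eval r k hr β (a : ℤ), habn]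
  have hmul : (cyclotomic (r * k) ℤ).eval ((bn : ℤ)) *
      (cyclotomic k ℤ).eval ((bn : ℤ)) = (cyclotomic k ℤ).eval ((bn : ℤ) ^ r) := by
    have h2 := congrArg (Polynomial.eval ((bn : ℤ)))
      (cyclotomic_expand_eq_cyclotomic_mul hr hrk ℤ)
    rw [expand_eval, eval_mul, mul_comm k r] at h2
    exact h2.symm
  -- real-valued quantities
  have hB1 : (1 : ℝ) < (bn : ℝ) := by exact_mod_cast Nat.lt_of_lt_of_le one_lt_two hbn2
  have hB0 : (0 : ℝ) < (bn : ℝ) := lt_trans one_pos hB1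
  have hBr1 : (1 : ℝ) < (bn : ℝ) ^ r := one_lt_pow₀ hB1 hr.pos.ne'
  -- bounds on cyclotomic evaluations
  have hlow : ((bn : ℝ) ^ r - 1) ^ E ≤ (cyclotomic k ℝ).eval ((bn : ℝ) ^ r) :=
    sub_one_pow_totient_le_cyclotomic_eval hBr1 k
  have hup : (cyclotomic k ℝ).eval (bn : ℝ) ≤ ((bn : ℝ) + 1) ^ E :=
    cyclotomic_eval_le_add_one_pow_totient hB1 k
  have hQpos : (0 : ℝ) < (cyclotomic k ℝ).eval (bn : ℝ) := by
    have h1 := sub_one_pow_totient_le_cyclotomic_eval hB1 k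
    have : (0:ℝ) < ((bn : ℝ) - 1) ^ E := pow_pos (by linarith) E
    linarith
  -- r ≤ (a+1)^E ≤ (bn+1)^E
  have ha1 : (1 : ℝ) < (a : ℝ) := by exact_mod_cast Nat.lt_of_lt_of_le one_lt_two ha
  have hapos : (0 : ℤ) < (cyclotomic k ℤ).eval (a : ℤ) := by
    have h1 := sub_one_pow_totient_le_cyclotomic_eval ha1 k
    have h2 : (0:ℝ) < ((a:ℝ) - 1) ^ E := pow_pos (by linarith) E
    have h3 : (0:ℝ) < (cyclotomic k ℝ).eval (a : ℝ) := by linarith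
    rw [← nat_eval_cast_real] at h3
    exact_mod_cast h3
  have hrle : (r : ℤ) ≤ (cyclotomic k ℤ).eval (a : ℤ) := Int.le_of_dvd hapos hdvd
  have hrleR : (r : ℝ) ≤ ((bn : ℝ) + 1) ^ E := by
    have h1 : (r : ℝ) ≤ (cyclotomic k ℝ).eval (a : ℝ) := by
      rw [← nat_eval_cast_real]; exact_mod_cast hrle
    have h2 : (cyclotomic k ℝ).eval (a : ℝ) ≤ ((a:ℝ) + 1) ^ E :=
      cyclotomic_eval_le_add_one_pow_totient ha1 k
    have hab : (a : ℝ) ≤ (bn : ℝ) := by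
      exact_mod_cast Nat.le_self_pow (pow_ne_zero _ hr.pos.ne') a
    have h3 : ((a:ℝ) + 1) ^ E ≤ ((bn : ℝ) + 1) ^ E :=
      pow_le_pow_left₀ (by linarith) (by linarith) E
    linarith
  -- the key strict inequality: bn^m * (bn+1)^2 < bn^r - 1  (over ℝ)
  have hkey : (bn : ℝ) ^ m * ((bn : ℝ) + 1) ^ 2 < (bn : ℝ) ^ r - 1 := by
    have hnat := aux_pow_ineq hbn2 hm2 hnem
    have hnatR : ((bn : ℝ) + 1) ^ 2 + 1 ≤ (bn : ℝ) ^ (m + 1) := by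
      have := (Nat.cast_le (α := ℝ)).2 hnat
      push_cast at this; linarith
    have hb2R : (2 : ℝ) ≤ (bn : ℝ) := by exact_mod_cast hbn2
    have hBm4 : (4 : ℝ) ≤ (bn : ℝ) ^ m := by
      calc (4:ℝ) = 2 ^ 2 := by norm_num
        _ ≤ (bn : ℝ) ^ 2 := pow_le_pow_left₀ (by norm_num) hb2R 2
        _ ≤ (bn : ℝ) ^ m := pow_le_pow_right₀ (by linarith) hm2
    have h1 : (bn : ℝ) ^ m * (((bn : ℝ) + 1) ^ 2 + 1) ≤ (bn : ℝ) ^ m * (bn : ℝ) ^ (m + 1) :=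
      mul_le_mul_of_nonneg_left hnatR (by positivity)
    have h2 : (bn : ℝ) ^ m * (bn : ℝ) ^ (m + 1) = (bn : ℝ) ^ r := by
      rw [← pow_add]; congr 1; omega
    nlinarith
  -- conclusion over ℝ : r * bn^(m*E) < Φ_{rk}(bn)
  have hPQ : (((cyclotomic (r * k) ℤ).eval ((bn : ℤ)) : ℤ) : ℝ) *
      (cyclotomic k ℝ).eval (bn : ℝ) = (cyclotomic k ℝ).eval ((bn : ℝ) ^ r) := by
    rw [← nat_eval_cast_real, ← nat_eval_pow_cast_real k bn r, ← Int.cast_mul, hmul]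
  have hmain : (r : ℝ) * (bn : ℝ) ^ (m * E) <
      (((cyclotomic (r * k) ℤ).eval ((bn : ℤ)) : ℤ) : ℝ) := by
    have hstep : (r : ℝ) * (bn : ℝ) ^ (m * E) * (cyclotomic k ℝ).eval (bn : ℝ) <
        (((cyclotomic (r * k) ℤ).eval ((bn : ℤ)) : ℤ) : ℝ) *
          (cyclotomic k ℝ).eval (bn : ℝ) := by
      calc (r : ℝ) * (bn : ℝ) ^ (m * E) * (cyclotomic k ℝ).eval (bn : ℝ)
          ≤ (r : ℝ) * (bn : ℝ) ^ (m * E) * ((bn : ℝ) + 1) ^ E := by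
            apply mul_le_mul_of_nonneg_left hup
            positivity
        _ ≤ ((bn : ℝ) + 1) ^ E * (bn : ℝ) ^ (m * E) * ((bn : ℝ) + 1) ^ E := by
            apply mul_le_mul_of_nonneg_right
              (mul_le_mul_of_nonneg_right hrleR (by positivity)) (by positivity)
        _ = ((bn : ℝ) ^ m * ((bn : ℝ) + 1) ^ 2) ^ E := by
            rw [mul_pow, pow_mul, ← pow_mul ((bn:ℝ)+1) 2 E, two_mul, pow_add]
            ring
        _ < ((bn : ℝ) ^ r - 1) ^ E := by
            apply pow_lt_pow_left₀ hkey (by positivity) (by omega)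
        _ ≤ (cyclotomic k ℝ).eval ((bn : ℝ) ^ r) := hlow
        _ = _ := hPQ.symm
    exact lt_of_mul_lt_mul_right hstep hQpos.le
  -- exponent arithmetic
  have hcop : Nat.Coprime (r ^ α) k := ((Nat.Prime.coprime_iff_not_dvd hr).2 hrk).pow_left α
  have htot : i.totient = r ^ β * (2 * m) * E := by
    rw [hik, Nat.totient_mul hcop, Nat.totient_prime_pow hr (by omega),
      show r - 1 = 2 * m by omega]
  have hexp : i.totient / 2 = r ^ β * (m * E) := by rw [htot]; ring_nf; omega
  -- finish
  have hrQ : (0 : ℚ) < (r : ℚ) := by exact_mod_cast hr.pos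
  rw [lt_div_iff₀ hrQ]
  have hZ : (r : ℤ) * (bn : ℤ) ^ (m * E) < (cyclotomic (r * k) ℤ).eval ((bn : ℤ)) := by
    exact_mod_cast hmain
  have hcast : ((a : ℚ)) ^ (i.totient / 2) = ((bn : ℚ)) ^ (m * E) := by
    rw [hexp, hbn]
    push_cast
    ring
  rw [hcast, hId]
  exact_mod_cast (by linarith :
    (bn : ℤ) ^ (m * E) * r < (cyclotomic (r * k) ℤ).eval ((bn : ℤ)))
end

section
/- Suppose a Frobenius group FC with kernel F and cyclic complement C = ⟨c⟩ of order n acts faithfully on a finite vector space V of characteristic p with p coprime to |F|. Then the fixed-point subspace C_V(c) is nonzero and the natural semidirect product V ⋊ C contains an element of order p·n. -/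
/-
If every orbit sum `N v = ∑_{i<n} cⁱ • v` vanished, then so would `∑_{i<n} (f cⁱ f⁻¹) • v` for
each `f ∈ F`. Summing over `F`: since `cⁱ ≠ 1` centralizes no nontrivial element of `F`,
`f ↦ f cⁱ f⁻¹ c⁻ⁱ` permutes `F`, so for `i ≠ 0` these terms agree with those of
`∑_f f • N v = 0`, and comparing the `i = 0` terms gives `|F| • v = ∑_f f • v`. As `p ∤ |F|`,
`F` then acts trivially, contradicting faithfulness. So some `w = N v` is nonzero; it is fixed
by `c`, and `(v, c) ∈ V ⋊ C` has `n`-th power `(w, 1)`, of order `p`, hence order `p * n`.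
-/

/-- The monoid homomorphism sending an additive automorphism of `V` to the
corresponding multiplicative automorphism of `Multiplicative V`. -/
def addAutToMulAut (V : Type*) [AddGroup V] :
    Multiplicative (AddAut V) →* MulAut (Multiplicative V) where
  toFun e := AddEquiv.toMultiplicative (Multiplicative.toAdd e)
  map_one' := rfl
  map_mul' _ _ := rfl

open Finset

theorem Subgroup.sum_conj_eq_sum_mul {G : Type*} [Group G] {F : Subgroup G} [Fintype F]
    (hF : F.Normal) {x : G} (hx : ∀ f ∈ F, x * f * x⁻¹ = f → f = 1)
    {M : Type*} [AddCommMonoid M] (φ : G → M) :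
    ∑ f : F, φ (f * x * (f : G)⁻¹) = ∑ f : F, φ (f * x) := by
  let commutatorWith : F → F := fun f =>
    ⟨f * (x * (f : G)⁻¹ * x⁻¹), F.mul_mem f.2 (hF.conj_mem _ (F.inv_mem f.2) x)⟩
  have hinj : Function.Injective commutatorWith := by
    intro a b hab
    have hconj : (a : G) * x * (a : G)⁻¹ = b * x * (b : G)⁻¹ := by
      have := congrArg Subtype.val hab
      simp only [commutatorWith, ← mul_assoc] at this
      exact mul_right_cancel this
    have hfix : x * ((b : G)⁻¹ * a) * x⁻¹ = (b : G)⁻¹ * a := by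
      rw [mul_inv_eq_iff_eq_mul]
      calc x * ((b : G)⁻¹ * a) = (b : G)⁻¹ * (b * x * (b : G)⁻¹) * a := by group
        _ = (b : G)⁻¹ * a * x := by rw [← hconj]; group
    have := hx _ (F.mul_mem (F.inv_mem b.2) a.2) hfix
    exact Subtype.ext (inv_mul_eq_one.mp this).symm
  refine Fintype.sum_bijective commutatorWith (Finite.injective_iff_bijective.mp hinj) _ _
    fun f => ?_
  simp only [commutatorWith, mul_assoc, inv_mul_cancel, mul_one]

theorem Subgroup.eq_bot_of_card_nsmul_eq_sum_smul {k V G : Type*} [DivisionRing k]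
    [AddCommGroup V] [Module k V] [Group G] [DistribMulAction G V] [FaithfulSMul G V]
    {F : Subgroup G} [Fintype F] (hcard : (Nat.card F : k) ≠ 0)
    (h : ∀ v : V, Nat.card F • v = ∑ f : F, (f : G) • v) : F = ⊥ := by
  rw [Subgroup.eq_bot_iff_forall]
  intro g hg
  refine eq_of_smul_eq_smul (α := V) fun v => ?_
  have hinv : g • ∑ f : F, (f : G) • v = ∑ f : F, (f : G) • v := by
    rw [smul_sum]
    simp_rw [← mul_smul]
    exact Fintype.sum_equiv (Equiv.mulLeft ⟨g, hg⟩) _ _ fun _ => rfl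
  have hnsmul : Nat.card F • g • v = Nat.card F • v := by
    rw [smul_comm, h, hinv, ← h]
  rw [one_smul]
  apply smul_right_injective V hcard
  simpa only [Nat.cast_smul_eq_nsmul] using hnsmul

section CyclicNorm

variable {G V : Type*} [Group G] [AddCommGroup V] [DistribMulAction G V]

noncomputable def cyclicNorm (c : G) (v : V) : V :=
  ∑ i ∈ range (orderOf c), c ^ i • v

theorem smul_cyclicNorm (c : G) (v : V) : c • cyclicNorm c v = cyclicNorm c v := by
  have hshift := (sum_range_succ' (fun i => c ^ i • v) (orderOf c)).symm.trans
    (sum_range_succ (fun i => c ^ i • v) (orderOf c))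
  simp only [pow_zero, one_smul, pow_orderOf_eq_one] at hshift
  simp only [cyclicNorm, smul_sum, ← mul_smul, ← pow_succ']
  exact add_right_cancel hshift

variable {F : Subgroup G} [Fintype F] {c : G}

theorem card_nsmul_eq_sum_smul_of_cyclicNorm_eq_zero (hF : F.Normal) (hc : IsOfFinOrder c)
    (hfrob : ∀ x ∈ Subgroup.zpowers c, x ≠ 1 → ∀ f ∈ F, x * f * x⁻¹ = f → f = 1)
    (hN : ∀ v : V, cyclicNorm c v = 0) (v : V) :
    Nat.card F • v = ∑ f : F, (f : G) • v := by
  have hconj : ∑ i ∈ range (orderOf c), ∑ f : F, ((f : G) * c ^ i * (f : G)⁻¹) • v = 0 := by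
    rw [sum_comm]
    refine sum_eq_zero fun f _ => ?_
    simp_rw [mul_smul, ← smul_sum]
    rw [← cyclicNorm, hN, smul_zero]
  have htrans : ∑ i ∈ range (orderOf c), ∑ f : F, ((f : G) * c ^ i) • v = 0 := by
    rw [sum_comm]
    refine sum_eq_zero fun f _ => ?_
    simp_rw [mul_smul, ← smul_sum]
    rw [← cyclicNorm, hN, smul_zero]
  have hrest : ∑ i ∈ (range (orderOf c)).erase 0, ∑ f : F, ((f : G) * c ^ i * (f : G)⁻¹) • v
      = ∑ i ∈ (range (orderOf c)).erase 0, ∑ f : F, ((f : G) * c ^ i) • v := by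
    refine sum_congr rfl fun i hi => Subgroup.sum_conj_eq_sum_mul hF ?_ (· • v)
    refine hfrob _ (Subgroup.npow_mem_zpowers c i) (pow_ne_one_of_lt_orderOf ?_ ?_)
    exacts [ne_of_mem_erase hi, mem_range.1 (mem_of_mem_erase hi)]
  rw [← add_sum_erase _ _ (mem_range.2 hc.orderOf_pos)] at hconj htrans
  simp only [pow_zero, mul_one, mul_inv_cancel, one_smul, sum_const, card_univ, hrest]
    at hconj htrans
  rw [Nat.card_eq_fintype_card]
  exact add_right_cancel (hconj.trans htrans.symm)

theorem exists_cyclicNorm_ne_zero {k : Type*} [DivisionRing k] [Module k V] [FaithfulSMul G V]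
    (hF : F.Normal) (hFne : F ≠ ⊥) (hcard : (Nat.card F : k) ≠ 0) (hc : IsOfFinOrder c)
    (hfrob : ∀ x ∈ Subgroup.zpowers c, x ≠ 1 → ∀ f ∈ F, x * f * x⁻¹ = f → f = 1) :
    ∃ v : V, cyclicNorm c v ≠ 0 := by
  by_contra! hN
  exact hFne (Subgroup.eq_bot_of_card_nsmul_eq_sum_smul hcard
    (card_nsmul_eq_sum_smul_of_cyclicNorm_eq_zero hF hc hfrob hN))

end CyclicNorm

theorem SemidirectProduct.mk_pow {N H : Type*} [CommGroup N] [Group H] {φ : H →* MulAut N}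
    (a : N) (h : H) (m : ℕ) :
    (⟨a, h⟩ : N ⋊[φ] H) ^ m = ⟨∏ i ∈ range m, φ (h ^ i) a, h ^ m⟩ := by
  induction m with
  | zero => simp only [pow_zero, prod_range_zero]; rfl
  | succ m ih =>
    rw [pow_succ, ih, mul_def, prod_range_succ, pow_succ]

theorem nsmul_eq_zero_of_charP (k : Type*) {V : Type*} [Semiring k] [AddCommMonoid V]
    [Module k V] (p : ℕ) [CharP k p] (v : V) : p • v = 0 := by
  rw [← Nat.cast_smul_eq_nsmul k, CharP.cast_eq_zero, zero_smul]

theorem orderOf_semidirectProduct_mk_of_cyclicNorm_ne_zero (k : Type*) {V G : Type*}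
    [Semiring k] [AddCommGroup V] [Module k V] [Group G] [DistribMulAction G V]
    (p : ℕ) [Fact p.Prime] [CharP k p] {C : Subgroup G} {c : G} (hc : c ∈ C) {v : V}
    (hv : cyclicNorm c v ≠ 0) :
    orderOf (⟨Multiplicative.ofAdd v, ⟨c, hc⟩⟩ : SemidirectProduct (Multiplicative V) C
      ((addAutToMulAut V).comp ((DistribMulAction.toAddAut G V).comp C.subtype))) =
      p * orderOf c := by
  set g : SemidirectProduct (Multiplicative V) C _ := ⟨Multiplicative.ofAdd v, ⟨c, hc⟩⟩
  have hn : orderOf c ≠ 0 := fun h => hv (by simp [cyclicNorm, h])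
  have hgn : g ^ orderOf c = SemidirectProduct.inl (Multiplicative.ofAdd (cyclicNorm c v)) := by
    rw [SemidirectProduct.mk_pow, cyclicNorm, ofAdd_sum]
    ext
    · rfl
    · exact pow_orderOf_eq_one c
  have hdvd : orderOf c ∣ orderOf g := by
    have h := orderOf_map_dvd SemidirectProduct.rightHom g
    rwa [show SemidirectProduct.rightHom g = ⟨c, hc⟩ from rfl, Subgroup.orderOf_mk] at h
  have hgnp : orderOf (g ^ orderOf c) = p := by
    refine orderOf_eq_prime ?_ ?_ <;> rw [hgn]
    · rw [← map_pow, ← ofAdd_nsmul, nsmul_eq_zero_of_charP k p, ofAdd_zero, map_one]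
    · rw [ne_eq, ← map_one SemidirectProduct.inl, SemidirectProduct.inl_inj, ← ofAdd_zero,
        EmbeddingLike.apply_eq_iff_eq]
      exact hv
  rw [← hgnp, orderOf_pow_of_dvd hn hdvd, Nat.div_mul_cancel hdvd]

theorem frobenius_group_action_order_general (k V G : Type*) [Field k] [AddCommGroup V]
    [Module k V] [Group G] [Finite G] (p n : ℕ) (hp : p.Prime) [CharP k p]
    [DistribMulAction G V] [FaithfulSMul G V]
    (F C : Subgroup G) (hF : F.Normal) (hFne : F ≠ ⊥) (c : G)
    (hC : C = Subgroup.zpowers c) (hn : orderOf c = n)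
    (hfrob : ∀ x ∈ C, x ≠ 1 → ∀ f ∈ F, x * f * x⁻¹ = f → f = 1)
    (hcop : Nat.Coprime p (Nat.card F)) :
    (∃ v : V, v ≠ 0 ∧ c • v = v) ∧
      ∃ g : SemidirectProduct (Multiplicative V) C
          ((addAutToMulAut V).comp
            ((DistribMulAction.toAddAut G V).comp C.subtype)),
        orderOf g = p * n := by
  subst hC hn
  have : Fact p.Prime := ⟨hp⟩
  have : Fintype F := Fintype.ofFinite F
  have hcard : (Nat.card F : k) ≠ 0 := by
    rw [Ne, CharP.cast_eq_zero_iff k p]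
    exact hp.coprime_iff_not_dvd.mp hcop
  obtain ⟨v, hv⟩ :=
    exists_cyclicNorm_ne_zero (V := V) hF hFne hcard (isOfFinOrder_of_finite c) hfrob
  exact ⟨⟨_, hv, smul_cyclicNorm c v⟩, _,
    orderOf_semidirectProduct_mk_of_cyclicNorm_ne_zero k p (Subgroup.mem_zpowers c) hv⟩

/-- If a Frobenius group `G = F ⋊ C`, with kernel `F` and cyclic complement
`C = ⟨c⟩` of order `n`, acts faithfully and linearly on a vector space `V` of
characteristic `p` with `p` coprime to `|F|`, then `c` has a nonzero fixed
vector on `V`, and the natural semidirect product `V ⋊ C` contains an element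
of order `p * n`. -/
theorem frobenius_group_action_order (k V G : Type*) [Field k] [AddCommGroup V]
    [Module k V] [Group G] [Finite G] (p n : ℕ) (hp : p.Prime) [CharP k p]
    [DistribMulAction G V] [SMulCommClass G k V] [FaithfulSMul G V]
    (F C : Subgroup G) (hF : F.Normal) (hFne : F ≠ ⊥) (c : G)
    (hC : C = Subgroup.zpowers c) (hn : orderOf c = n) (hn1 : 1 < n)
    (hdisj : F ⊓ C = ⊥) (hjoin : F ⊔ C = ⊤)
    (hfrob : ∀ x ∈ C, x ≠ 1 → ∀ f ∈ F, x * f * x⁻¹ = f → f = 1)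
    (hcop : Nat.Coprime p (Nat.card F)) :
    (∃ v : V, v ≠ 0 ∧ c • v = v) ∧
      ∃ g : SemidirectProduct (Multiplicative V) C
          ((addAutToMulAut V).comp
            ((DistribMulAction.toAddAut G V).comp C.subtype)),
        orderOf g = p * n :=
  frobenius_group_action_order_general k V G p n hp F C hF hFne c hC hn hfrob hcop
end
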